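/- Let N ≥ 3, N < t < ∞, σ ∈ ℝ, and β^- ∈ ℝ with β^- + σ < 0. Suppose b : (0,1) → ℝ satisfies ∫_s^{2s} |b(τ)|^t dτ ≤ M^t s^{1 - t(2+σ)} for all 0 < s ≤ 1/2. Then there is a constant D (depending on N, t, σ, β^-, M) such that r^{β^- + σ} ∫_0^r |b(τ)|/τ^{β^- - 1} dτ ≤ D for all 0 < r ≤ 1/2. -/

import Mathlib

/-!
Split `(0, r)` into the dyadic blocks `(r / 2 ^ (k + 1), r / 2 ^ k]`. On a block `(s, 2s]` the
weight `τ ^ (1 - β)` is comparable to `s ^ (1 - β)`, and Hölder's inequality turns the `Lᵗ` bound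
into `∫ |b| ≤ |M| s ^ (-1 - σ)`. So the block at scale `s` contributes `O(s ^ (-(β + σ)))`, and as
`β + σ < 0` these contributions form a geometric series dominated by its first term,
of order `r ^ (-(β + σ))`.
-/

open Real MeasureTheory Set

theorem ENNReal.lintegral_le_lintegral_rpow_mul_measure_univ {α : Type*} [MeasurableSpace α]
    (μ : Measure α) {p : ℝ} (hp : 1 < p) (f : α → ENNReal) :
    ∫⁻ a, f a ∂μ ≤ (∫⁻ a, f a ^ p ∂μ) ^ p⁻¹ * μ univ ^ (1 - p⁻¹) := by
  have hpq := Real.HolderConjugate.conjExponent hp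
  -- Hölder needs measurability; a measurable minorant with the same integral supplies it.
  obtain ⟨g, hg, hgf, hg_eq⟩ := exists_measurable_le_lintegral_eq μ f
  have holder := ENNReal.lintegral_mul_le_Lp_mul_Lq μ hpq hg.aemeasurable
    (aemeasurable_const (b := (1 : ENNReal)))
  simp only [Pi.mul_apply, mul_one, ENNReal.one_rpow, lintegral_const, one_mul, one_div,
    ← hpq.one_sub_inv] at holder
  calc ∫⁻ a, f a ∂μ = ∫⁻ a, g a ∂μ := hg_eq
    _ ≤ (∫⁻ a, g a ^ p ∂μ) ^ p⁻¹ * μ univ ^ (1 - p⁻¹) := holder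
    _ ≤ (∫⁻ a, f a ^ p ∂μ) ^ p⁻¹ * μ univ ^ (1 - p⁻¹) := by
      gcongr
      exact hgf _

theorem rpow_le_max_one_two_rpow_mul_rpow_of_mem_Ioc {s τ : ℝ} (a : ℝ) (hs : 0 < s)
    (hτ : τ ∈ Ioc s (2 * s)) : τ ^ a ≤ max 1 (2 ^ a) * s ^ a := by
  have hτ0 : 0 < τ := hs.trans hτ.1
  rcases le_or_gt 0 a with ha | ha
  · calc τ ^ a ≤ (2 * s) ^ a := rpow_le_rpow hτ0.le hτ.2 ha
      _ = 2 ^ a * s ^ a := mul_rpow zero_le_two hs.le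
      _ ≤ max 1 (2 ^ a) * s ^ a := by gcongr; exact le_max_right _ _
  · calc τ ^ a ≤ s ^ a := rpow_le_rpow_of_nonpos hs hτ.1.le ha.le
      _ ≤ max 1 (2 ^ a) * s ^ a := le_mul_of_one_le_left (by positivity) (le_max_left _ _)

theorem lintegral_Ioc_le_of_lintegral_rpow_le {f : ℝ → ℝ} {s t A γ : ℝ} (ht : 1 < t)
    (hs : 0 < s) (hA : 0 ≤ A)
    (hf : ∫⁻ τ in Ioc s (2 * s), ENNReal.ofReal (|f τ| ^ t) ≤
      ENNReal.ofReal (A ^ t * s ^ (1 - t * γ))) :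
    ∫⁻ τ in Ioc s (2 * s), ENNReal.ofReal |f τ| ≤ ENNReal.ofReal (A * s ^ (1 - γ)) := by
  have ht0 : 0 < t := one_pos.trans ht
  have hvol : volume.restrict (Ioc s (2 * s)) univ = ENNReal.ofReal s := by
    rw [Measure.restrict_apply_univ, Real.volume_Ioc]; ring_nf
  have hpow : ∀ τ, ENNReal.ofReal |f τ| ^ t = ENNReal.ofReal (|f τ| ^ t) := fun τ =>
    ENNReal.ofReal_rpow_of_nonneg (abs_nonneg _) ht0.le
  have hexp : (1 - t * γ) * t⁻¹ + (1 - t⁻¹) = 1 - γ := by field_simp; ring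
  calc ∫⁻ τ in Ioc s (2 * s), ENNReal.ofReal |f τ|
      ≤ (∫⁻ τ in Ioc s (2 * s), ENNReal.ofReal (|f τ| ^ t)) ^ t⁻¹ *
          ENNReal.ofReal s ^ (1 - t⁻¹) := by
        simpa only [hpow, hvol] using ENNReal.lintegral_le_lintegral_rpow_mul_measure_univ
          (volume.restrict (Ioc s (2 * s))) ht (fun τ => ENNReal.ofReal |f τ|)
    _ ≤ ENNReal.ofReal (A ^ t * s ^ (1 - t * γ)) ^ t⁻¹ * ENNReal.ofReal s ^ (1 - t⁻¹) := by
        gcongr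
    _ = ENNReal.ofReal (A * s ^ (1 - γ)) := by
        have h1 : 0 ≤ 1 - t⁻¹ := sub_nonneg.2 (inv_le_one_of_one_le₀ ht.le)
        rw [ENNReal.ofReal_rpow_of_nonneg (by positivity) (by positivity),
          ENNReal.ofReal_rpow_of_nonneg hs.le h1, ← ENNReal.ofReal_mul (by positivity),
          mul_rpow (by positivity) (by positivity), ← rpow_mul hA, ← rpow_mul hs.le,
          mul_inv_cancel₀ ht0.ne', rpow_one, mul_assoc, ← rpow_add hs, hexp]

theorem lintegral_Ioc_div_rpow_le {f : ℝ → ℝ} {s β A α : ℝ} (hs : 0 < s)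
    (hf : ∫⁻ τ in Ioc s (2 * s), ENNReal.ofReal |f τ| ≤ ENNReal.ofReal (A * s ^ α)) :
    ∫⁻ τ in Ioc s (2 * s), ENNReal.ofReal (|f τ| / τ ^ (β - 1)) ≤
      ENNReal.ofReal (max 1 (2 ^ (1 - β)) * A * s ^ (1 - β + α)) := by
  set C := max 1 ((2 : ℝ) ^ (1 - β))
  have hweight : ∀ τ ∈ Ioc s (2 * s), ENNReal.ofReal (|f τ| / τ ^ (β - 1)) ≤
      ENNReal.ofReal (C * s ^ (1 - β)) * ENNReal.ofReal |f τ| := fun τ hτ => by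
    rw [← ENNReal.ofReal_mul (by positivity), div_eq_mul_inv, ← rpow_neg (hs.trans hτ.1).le,
      neg_sub, mul_comm]
    gcongr
    exact rpow_le_max_one_two_rpow_mul_rpow_of_mem_Ioc _ hs hτ
  calc ∫⁻ τ in Ioc s (2 * s), ENNReal.ofReal (|f τ| / τ ^ (β - 1))
      ≤ ∫⁻ τ in Ioc s (2 * s), ENNReal.ofReal (C * s ^ (1 - β)) * ENNReal.ofReal |f τ| :=
        setLIntegral_mono' measurableSet_Ioc hweight
    _ ≤ ENNReal.ofReal (C * s ^ (1 - β)) * ENNReal.ofReal (A * s ^ α) := by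
        rw [lintegral_const_mul' _ _ ENNReal.ofReal_ne_top]; gcongr
    _ = ENNReal.ofReal (C * A * s ^ (1 - β + α)) := by
        rw [← ENNReal.ofReal_mul (by positivity), rpow_add hs]
        ring_nf

theorem Ioo_zero_subset_iUnion_Ioc_div_two_pow {r : ℝ} (hr : 0 < r) :
    Ioo 0 r ⊆ ⋃ k : ℕ, Ioc (r / 2 ^ (k + 1)) (r / 2 ^ k) := by
  intro x ⟨hx0, hxr⟩
  have hex : ∃ n : ℕ, r / 2 ^ n < x := by
    obtain ⟨n, hn⟩ := exists_pow_lt_of_lt_one (div_pos hx0 hr) (by norm_num : (2 : ℝ)⁻¹ < 1)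
    exact ⟨n, by rwa [inv_pow, lt_div_iff₀ hr, inv_mul_eq_div] at hn⟩
  have hpos : Nat.find hex ≠ 0 := fun h => by
    have := Nat.find_spec hex
    rw [h, pow_zero, div_one] at this
    exact this.not_gt hxr
  obtain ⟨k, hk⟩ := Nat.exists_eq_succ_of_ne_zero hpos
  refine mem_iUnion.2 ⟨k, ?_, not_lt.1 (Nat.find_min hex (k.lt_succ_self.trans_eq hk.symm))⟩
  simpa [hk] using Nat.find_spec hex

theorem lintegral_Ioo_zero_le_tsum_lintegral_Ioc {μ : Measure ℝ} (f : ℝ → ENNReal) {r : ℝ}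
    (hr : 0 < r) :
    ∫⁻ x in Ioo 0 r, f x ∂μ ≤ ∑' k : ℕ, ∫⁻ x in Ioc (r / 2 ^ (k + 1)) (r / 2 ^ k), f x ∂μ :=
  (lintegral_mono_set (Ioo_zero_subset_iUnion_Ioc_div_two_pow hr)).trans (lintegral_iUnion_le _ _)

theorem ofReal_rpow_neg_mul_tsum_div_two_pow_rpow {r e C : ℝ} (hr : 0 < r) (he : 0 < e)
    (hC : 0 ≤ C) :
    ENNReal.ofReal (r ^ (-e)) * ∑' k : ℕ, ENNReal.ofReal (C * (r / 2 ^ (k + 1)) ^ e) =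
      ENNReal.ofReal (C / (2 ^ e - 1)) := by
  set c : ℝ := (2 : ℝ) ^ (-e)
  have hc0 : 0 < c := by positivity
  have hc1 : c < 1 := rpow_lt_one_of_one_lt_of_neg one_lt_two (neg_lt_zero.2 he)
  have hterm : ∀ k : ℕ, ENNReal.ofReal (C * (r / 2 ^ (k + 1)) ^ e) =
      ENNReal.ofReal (C * r ^ e) * ENNReal.ofReal c ^ (k + 1) := fun k => by
    rw [← ENNReal.ofReal_pow hc0.le, ← ENNReal.ofReal_mul (by positivity),
      div_rpow hr.le (by positivity),
      ← rpow_natCast, ← rpow_natCast, ← rpow_mul zero_le_two, ← rpow_mul zero_le_two, neg_mul,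
      rpow_neg zero_le_two, mul_comm e]
    ring_nf
  calc ENNReal.ofReal (r ^ (-e)) * ∑' k : ℕ, ENNReal.ofReal (C * (r / 2 ^ (k + 1)) ^ e)
      = ENNReal.ofReal (r ^ (-e)) * (ENNReal.ofReal (C * r ^ e) *
          (ENNReal.ofReal c * (1 - ENNReal.ofReal c)⁻¹)) := by
        simp_rw [hterm, ENNReal.tsum_mul_left, ENNReal.tsum_geometric_add_one]
    _ = ENNReal.ofReal (r ^ (-e) * (C * r ^ e) * (c * (1 - c)⁻¹)) := by
        rw [← ENNReal.ofReal_one, ← ENNReal.ofReal_sub _ hc0.le,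
          ← ENNReal.ofReal_inv_of_pos (by linarith), ← ENNReal.ofReal_mul hc0.le,
          ← ENNReal.ofReal_mul (by positivity), ← ENNReal.ofReal_mul (by positivity)]
        ring_nf
    _ = ENNReal.ofReal (C / (2 ^ e - 1)) := by
        congr 1
        rw [rpow_neg hr.le, show c = ((2 : ℝ) ^ e)⁻¹ from rpow_neg zero_le_two e]
        field_simp

theorem weighted_integral_bound_general (N : ℕ) (hN : 3 ≤ N) (t σ β M : ℝ) (ht : (N : ℝ) < t)
    (hβ : β + σ < 0) (b : ℝ → ℝ)
    (hbd : ∀ s : ℝ, 0 < s → s ≤ 1 / 2 →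
      ∫⁻ τ in Set.Ioc s (2 * s), ENNReal.ofReal (|b τ| ^ t) ≤
        ENNReal.ofReal (M ^ t * s ^ (1 - t * (2 + σ)))) :
    ∃ D : ℝ, ∀ r : ℝ, 0 < r → r ≤ 1 / 2 →
      ENNReal.ofReal (r ^ (β + σ)) *
        ∫⁻ τ in Set.Ioo (0:ℝ) r, ENNReal.ofReal (|b τ| / τ ^ (β - 1)) ≤
      ENNReal.ofReal D := by
  have ht1 : 1 < t := by
    have : (3 : ℝ) ≤ N := by exact_mod_cast hN
    linarith
  set K := max 1 ((2 : ℝ) ^ (1 - β)) * |M|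
  refine ⟨K / (2 ^ (-(β + σ)) - 1), fun r hr hr2 => ?_⟩
  have hblock : ∀ k : ℕ, ∫⁻ τ in Ioc (r / 2 ^ (k + 1)) (r / 2 ^ k),
      ENNReal.ofReal (|b τ| / τ ^ (β - 1)) ≤
        ENNReal.ofReal (K * (r / 2 ^ (k + 1)) ^ (-(β + σ))) := by
    intro k
    set s := r / 2 ^ (k + 1)
    have hs : 0 < s := by positivity
    have h2s : r / 2 ^ k = 2 * s := by simp only [s, pow_succ]; field_simp
    have hLt : ∫⁻ τ in Ioc s (2 * s), ENNReal.ofReal (|b τ| ^ t) ≤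
        ENNReal.ofReal (|M| ^ t * s ^ (1 - t * (2 + σ))) :=
      (hbd s hs ((div_le_self hr.le (one_le_pow₀ one_le_two)).trans hr2)).trans
        (ENNReal.ofReal_le_ofReal (mul_le_mul_of_nonneg_right
          ((le_abs_self _).trans (abs_rpow_le_abs_rpow M t)) (by positivity)))
    rw [h2s, show -(β + σ) = 1 - β + (1 - (2 + σ)) by ring]
    exact lintegral_Ioc_div_rpow_le hs
      (lintegral_Ioc_le_of_lintegral_rpow_le ht1 hs (abs_nonneg M) hLt)
  calc ENNReal.ofReal (r ^ (β + σ)) * ∫⁻ τ in Ioo 0 r, ENNReal.ofReal (|b τ| / τ ^ (β - 1))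
      ≤ ENNReal.ofReal (r ^ (-(-(β + σ)))) * ∑' k : ℕ,
          ∫⁻ τ in Ioc (r / 2 ^ (k + 1)) (r / 2 ^ k), ENNReal.ofReal (|b τ| / τ ^ (β - 1)) := by
        rw [neg_neg]
        gcongr
        exact lintegral_Ioo_zero_le_tsum_lintegral_Ioc _ hr
    _ ≤ ENNReal.ofReal (r ^ (-(-(β + σ)))) * ∑' k : ℕ,
          ENNReal.ofReal (K * (r / 2 ^ (k + 1)) ^ (-(β + σ))) := by
        gcongr with k
        exact hblock k
    _ = ENNReal.ofReal (K / (2 ^ (-(β + σ)) - 1)) :=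
      ofReal_rpow_neg_mul_tsum_div_two_pow_rpow hr (by linarith) (by positivity)

/-- Weighted zero-order estimate: r^{β+σ} ∫₀^r |b(τ)|/τ^{β-1} dτ is uniformly bounded. -/
theorem weighted_integral_bound (N : ℕ) (hN : 3 ≤ N) (t σ β M : ℝ) (ht : (N : ℝ) < t)
    (hβ : β + σ < 0) (b : ℝ → ℝ) (hb : Measurable b)
    (hbd : ∀ s : ℝ, 0 < s → s ≤ 1 / 2 →
      ∫⁻ τ in Set.Ioc s (2 * s), ENNReal.ofReal (|b τ| ^ t) ≤
        ENNReal.ofReal (M ^ t * s ^ (1 - t * (2 + σ)))) :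
    ∃ D : ℝ, ∀ r : ℝ, 0 < r → r ≤ 1 / 2 →
      ENNReal.ofReal (r ^ (β + σ)) *
        ∫⁻ τ in Set.Ioo (0:ℝ) r, ENNReal.ofReal (|b τ| / τ ^ (β - 1)) ≤
      ENNReal.ofReal D :=
  weighted_integral_bound_general N hN t σ β M ht hβ b hbd
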